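/- arXiv:1404.4545 — 5 statements merged into one kernel-verified Lean document; each statement's English description precedes it below -/
import Mathlib

section
/- The extended polarized Heisenberg group ℍ_e^{pol} coincides (up to a permutation of the coordinates) with the full shearlet group 𝕊: the map (p,τ,q,a) ↦ (a, p, τ, q) is a group isomorphism from ℍ_e^{pol} to 𝕊. -/
open Matrix

/-- Underlying set of the full shearlet group: `ℝ* × ℝ^{d-1} × ℝ × ℝ^{d-1}`. -/
abbrev ShearletFull (d : ℕ) : Type :=
  {a : ℝ // a ≠ 0} × (Fin (d - 1) → ℝ) × ℝ × (Fin (d - 1) → ℝ)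

/-- The full shearlet group operation. -/
noncomputable def shMul (d : ℕ) (γ : ℝ) (x y : ShearletFull d) : ShearletFull d :=
  ⟨⟨x.1.1 * y.1.1, mul_ne_zero x.1.2 y.1.2⟩,
    fun i => x.2.1 i + |x.1.1| ^ (1 - γ) * y.2.1 i,
    x.2.2.1 + x.1.1 * y.2.2.1 + Real.sign x.1.1 * |x.1.1| ^ γ * (x.2.1 ⬝ᵥ y.2.2.2),
    fun i => x.2.2.2 i + Real.sign x.1.1 * |x.1.1| ^ γ * y.2.2.2 i⟩

/-- Underlying set of the extended polarized Heisenberg group: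
`ℝ^{d-1} × ℝ × ℝ^{d-1} × ℝ*`. -/
abbrev ExtHeisPol (d : ℕ) : Type :=
  (Fin (d - 1) → ℝ) × ℝ × (Fin (d - 1) → ℝ) × {a : ℝ // a ≠ 0}

/-- The extended polarized Heisenberg group operation
`(p,τ,q,a)∘(p',τ',q',a') =
  (p + |a|^{1-γ}p', τ + aτ' + sgn(a)|a|^γ pᵀq', q + sgn(a)|a|^γ q', aa')`. -/
noncomputable def extHeisPolMul (d : ℕ) (γ : ℝ) (x y : ExtHeisPol d) : ExtHeisPol d :=
  ⟨fun i => x.1 i + |x.2.2.2.1| ^ (1 - γ) * y.1 i,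
    x.2.1 + x.2.2.2.1 * y.2.1 + Real.sign x.2.2.2.1 * |x.2.2.2.1| ^ γ * (x.1 ⬝ᵥ y.2.2.1),
    fun i => x.2.2.1 i + Real.sign x.2.2.2.1 * |x.2.2.2.1| ^ γ * y.2.2.1 i,
    ⟨x.2.2.2.1 * y.2.2.2.1, mul_ne_zero x.2.2.2.2 y.2.2.2.2⟩⟩

/-- The coordinate permutation `(p,τ,q,a) ↦ (a,p,τ,q)` is a group isomorphism
from the extended polarized Heisenberg group onto the full shearlet group. -/
theorem extHeisPol_eq_shearletFull (d : ℕ) (γ : ℝ) :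
    Function.Bijective
      (fun x : ExtHeisPol d => ((x.2.2.2, x.1, x.2.1, x.2.2.1) : ShearletFull d)) ∧
    ∀ x y : ExtHeisPol d,
      (fun x : ExtHeisPol d => ((x.2.2.2, x.1, x.2.1, x.2.2.1) : ShearletFull d))
          (extHeisPolMul d γ x y) =
        shMul d γ
          ((fun x : ExtHeisPol d => ((x.2.2.2, x.1, x.2.1, x.2.2.1) : ShearletFull d)) x)
          ((fun x : ExtHeisPol d => ((x.2.2.2, x.1, x.2.1, x.2.2.1) : ShearletFull d)) y) := by
  refine ⟨⟨fun x y h => ?_, fun z => ⟨(z.2.1, z.2.2.1, z.2.2.2, z.1), rfl⟩⟩, fun x y => rfl⟩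
  obtain ⟨p, τ, q, a⟩ := x
  obtain ⟨p', τ', q', a'⟩ := y
  simp only [Prod.mk.injEq] at h
  simp [h.1, h.2.1, h.2.2.1, h.2.2.2]
end

section
/- The map κ⁺ : 𝕊⁺ → Sp(d,ℝ) sending (a,s,t₁,t̃) to the block matrix [[M(s,a), 0],[σ(t₁,t̃)M(s,a), M(s,a)^{−T}]] is an injective group homomorphism from the connected shearlet group into the symplectic group. -/
open Matrix

/-- Underlying set of the connected shearlet group:
`ℝ⁺ × ℝ^{d-1} × ℝ × ℝ^{d-1}`. -/
abbrev ShearletPos (d : ℕ) : Type :=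
  {a : ℝ // 0 < a} × (Fin (d - 1) → ℝ) × ℝ × (Fin (d - 1) → ℝ)

/-- Connected shearlet group operation
`(a,s,t₁,t̃)∘(a',s',t₁',t̃') = (aa', s + a^{1-γ}s', t₁ + at₁' + a^γ sᵀt̃', t̃ + a^γ t̃')`. -/
noncomputable def shPosMul (d : ℕ) (γ : ℝ) (x y : ShearletPos d) : ShearletPos d :=
  ⟨⟨x.1.1 * y.1.1, mul_pos x.1.2 y.1.2⟩,
    fun i => x.2.1 i + x.1.1 ^ (1 - γ) * y.2.1 i,
    x.2.2.1 + x.1.1 * y.2.2.1 + x.1.1 ^ γ * (x.2.1 ⬝ᵥ y.2.2.2),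
    fun i => x.2.2.2 i + x.1.1 ^ γ * y.2.2.2 i⟩

/-- `Ã_{a,γ} = diag(a^{-1/2}, a^{1/2-γ} I_{d-1})`. -/
noncomputable def Atil (d : ℕ) (γ a : ℝ) :
    Matrix (Fin 1 ⊕ Fin (d - 1)) (Fin 1 ⊕ Fin (d - 1)) ℝ :=
  Matrix.fromBlocks (a ^ (-(1 : ℝ) / 2) • 1) 0 0 (a ^ ((1 : ℝ) / 2 - γ) • 1)

/-- `S̃_s = [[1, 0], [-s, I_{d-1}]]`. -/
def Stil (d : ℕ) (s : Fin (d - 1) → ℝ) :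
    Matrix (Fin 1 ⊕ Fin (d - 1)) (Fin 1 ⊕ Fin (d - 1)) ℝ :=
  Matrix.fromBlocks 1 0 (Matrix.of fun i (_ : Fin 1) => -s i) 1

/-- `M(s,a) = S̃_s Ã_{a,γ}`. -/
noncomputable def Mmat (d : ℕ) (γ a : ℝ) (s : Fin (d - 1) → ℝ) :
    Matrix (Fin 1 ⊕ Fin (d - 1)) (Fin 1 ⊕ Fin (d - 1)) ℝ :=
  Stil d s * Atil d γ a

/-- `σ(t₁,t̃) = [[t₁, (1/2)t̃ᵀ], [(1/2)t̃, 0]]`. -/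
noncomputable def sigMat (d : ℕ) (t₁ : ℝ) (tt : Fin (d - 1) → ℝ) :
    Matrix (Fin 1 ⊕ Fin (d - 1)) (Fin 1 ⊕ Fin (d - 1)) ℝ :=
  Matrix.fromBlocks (Matrix.of fun _ _ => t₁)
    (Matrix.of fun (_ : Fin 1) j => (1 / 2) * tt j)
    (Matrix.of fun i (_ : Fin 1) => (1 / 2) * tt i) 0

/-- `κ⁺(a,s,t₁,t̃) = [[M(s,a), 0], [σ(t₁,t̃)M(s,a), M(s,a)⁻ᵀ]]`. -/
noncomputable def kappaPlus (d : ℕ) (γ : ℝ) (x : ShearletPos d) :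
    Matrix ((Fin 1 ⊕ Fin (d - 1)) ⊕ (Fin 1 ⊕ Fin (d - 1)))
      ((Fin 1 ⊕ Fin (d - 1)) ⊕ (Fin 1 ⊕ Fin (d - 1))) ℝ :=
  Matrix.fromBlocks (Mmat d γ x.1.1 x.2.1) 0
    (sigMat d x.2.2.1 x.2.2.2 * Mmat d γ x.1.1 x.2.1) ((Mmat d γ x.1.1 x.2.1)⁻¹)ᵀ

/-! κ⁺(a,s,t₁,t̃) has the shape `[[M, 0], [σ M, M⁻ᵀ]]` with `σ` symmetric. Every such matrix with
`M` invertible is symplectic, and two of them multiply to the one with data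
`(M M', σ + M⁻ᵀ σ' M⁻¹)`. The homomorphism property therefore reduces to two identities:
`M(s,a) M(s',a') = M(s + a^{1-γ}s', aa')`, which comes from `Ã_a S̃_{s'} = S̃_{a^{1-γ}s'} Ã_a`, and
`Mᵀ σ(a t₁' + a^γ sᵀt̃', a^γ t̃') M = σ(t₁', t̃')`, a congruence computed separately for `S̃_s`
and `Ã_a`. Injectivity: `M` and `σ` are read off the blocks, and `a`, `s`, `t₁`, `t̃` off their
entries. -/

namespace Matrix

variable {n R : Type*} [Fintype n] [DecidableEq n] [CommRing R]

noncomputable def lowerSymplectic (M σ : Matrix n n R) : Matrix (n ⊕ n) (n ⊕ n) R :=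
  fromBlocks M 0 (σ * M) (M⁻¹)ᵀ

theorem lowerSymplectic_mem_symplecticGroup {M σ : Matrix n n R} (hM : IsUnit M.det)
    (hσ : σ.IsSymm) : lowerSymplectic M σ ∈ symplecticGroup n R := by
  refine SymplecticGroup.fromBlocks_mem_iff.2 ⟨?_, by simp, ?_⟩
  · rw [transpose_mul, hσ.eq, Matrix.mul_assoc]
  · rw [Matrix.mul_zero, sub_zero, ← transpose_mul, nonsing_inv_mul M hM, transpose_one]

theorem lowerSymplectic_mul {M M' σ σ' τ : Matrix n n R} (hM : IsUnit M.det)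
    (hτ : Mᵀ * τ * M = σ') :
    lowerSymplectic M σ * lowerSymplectic M' σ' = lowerSymplectic (M * M') (σ + τ) := by
  have hMT : (M⁻¹)ᵀ * Mᵀ = 1 := by rw [← transpose_mul, mul_nonsing_inv M hM, transpose_one]
  simp only [lowerSymplectic, fromBlocks_multiply, Matrix.mul_zero, Matrix.zero_mul, add_zero,
    zero_add, mul_inv_rev, transpose_mul, fromBlocks_inj, true_and, and_true]
  rw [← hτ, Matrix.add_mul]
  simp only [← Matrix.mul_assoc, hMT, Matrix.one_mul]

theorem lowerSymplectic_injective {M M' σ σ' : Matrix n n R} (hM : IsUnit M.det)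
    (h : lowerSymplectic M σ = lowerSymplectic M' σ') : M = M' ∧ σ = σ' := by
  obtain ⟨rfl, -, hσ, -⟩ := fromBlocks_inj.1 h
  exact ⟨rfl, ((isUnit_iff_isUnit_det M).2 hM).mul_left_inj.1 hσ⟩

end Matrix

section

variable {d : ℕ} {γ : ℝ}

theorem Stil_mul_Stil (s s' : Fin (d - 1) → ℝ) : Stil d s * Stil d s' = Stil d (s + s') := by
  simp only [Stil, fromBlocks_multiply, fromBlocks_inj]
  refine ⟨by simp, by simp, ?_, by simp⟩
  ext i j; simp [add_comm]

theorem Atil_mul_Atil {a b : ℝ} (ha : 0 ≤ a) (hb : 0 ≤ b) :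
    Atil d γ a * Atil d γ b = Atil d γ (a * b) := by
  simp [Atil, fromBlocks_multiply, smul_smul, Real.mul_rpow ha hb, mul_comm]

theorem Atil_mul_Stil {a : ℝ} (ha : 0 < a) (s : Fin (d - 1) → ℝ) :
    Atil d γ a * Stil d s = Stil d (a ^ (1 - γ) • s) * Atil d γ a := by
  have h : a ^ ((2 : ℝ)⁻¹ - γ) = a ^ (1 - γ) * a ^ (-(1 : ℝ) / 2) := by
    rw [← Real.rpow_add ha]; ring_nf
  simp only [Atil, Stil, fromBlocks_multiply, fromBlocks_inj]
  refine ⟨by simp, by simp, ?_, by simp⟩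
  ext i j; simp [h, mul_assoc, mul_comm]

theorem Mmat_mul_Mmat {a b : ℝ} (ha : 0 < a) (hb : 0 < b) (s s' : Fin (d - 1) → ℝ) :
    Mmat d γ a s * Mmat d γ b s' = Mmat d γ (a * b) (s + a ^ (1 - γ) • s') := by
  rw [Mmat, Mmat, Mmat, Matrix.mul_assoc, ← Matrix.mul_assoc (Atil d γ a), Atil_mul_Stil ha,
    Matrix.mul_assoc, ← Matrix.mul_assoc, Stil_mul_Stil, Atil_mul_Atil ha.le hb.le]

theorem isUnit_det_Mmat {a : ℝ} (ha : 0 < a) (s : Fin (d - 1) → ℝ) :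
    IsUnit (Mmat d γ a s).det := by
  rw [isUnit_iff_ne_zero, Mmat, det_mul, Stil, Atil, det_fromBlocks_zero₁₂, det_fromBlocks_zero₁₂]
  simp only [det_smul, det_one, mul_one, one_mul]
  positivity

theorem sigMat_isSymm (t : ℝ) (tt : Fin (d - 1) → ℝ) : (sigMat d t tt).IsSymm := by
  simp only [IsSymm, sigMat, fromBlocks_transpose, fromBlocks_inj]
  refine ⟨by ext; simp, by ext; simp, by ext; simp, by simp⟩

theorem sigMat_add (t u : ℝ) (tt uu : Fin (d - 1) → ℝ) :
    sigMat d t tt + sigMat d u uu = sigMat d (t + u) (tt + uu) := by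
  simp only [sigMat, fromBlocks_add, fromBlocks_inj]
  refine ⟨by ext; simp, by ext; simp; ring, by ext; simp; ring, by simp⟩

theorem sigMat_injective {t u : ℝ} {tt uu : Fin (d - 1) → ℝ}
    (h : sigMat d t tt = sigMat d u uu) : t = u ∧ tt = uu := by
  obtain ⟨h₁₁, -, h₂₁, -⟩ := fromBlocks_inj.1 h
  refine ⟨congrFun₂ h₁₁ 0 0, funext fun i => ?_⟩
  simpa using congrFun₂ h₂₁ i 0

theorem Stil_transpose_mul_sigMat_mul (s : Fin (d - 1) → ℝ) (t : ℝ) (tt : Fin (d - 1) → ℝ) :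
    (Stil d s)ᵀ * sigMat d t tt * Stil d s = sigMat d (t - s ⬝ᵥ tt) tt := by
  simp only [Stil, sigMat, fromBlocks_transpose, fromBlocks_multiply, fromBlocks_inj]
  refine ⟨?_, by simp, by simp, by simp⟩
  ext
  simp only [transpose_one, Matrix.one_mul, Matrix.mul_one, Matrix.mul_zero, add_zero,
    Matrix.add_apply, of_apply, Matrix.mul_apply, transpose_apply, neg_mul, mul_neg,
    Finset.sum_neg_distrib, dotProduct]
  rw [sub_eq_add_neg, add_assoc, ← neg_add, ← Finset.sum_add_distrib]
  ring_nf

theorem Atil_transpose_mul_sigMat_mul {a : ℝ} (ha : 0 < a) (t : ℝ) (tt : Fin (d - 1) → ℝ) :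
    (Atil d γ a)ᵀ * sigMat d t tt * Atil d γ a = sigMat d (a⁻¹ * t) (a ^ (-γ) • tt) := by
  simp only [Atil, sigMat, fromBlocks_transpose, fromBlocks_multiply, fromBlocks_inj]
  have h₁ : a ^ (-(1 : ℝ) / 2) * a ^ (-(1 : ℝ) / 2) = a⁻¹ := by
    rw [← Real.rpow_add ha, ← Real.rpow_neg_one]; norm_num
  have h₂ : a ^ (-(1 : ℝ) / 2) * a ^ ((2 : ℝ)⁻¹ - γ) = a ^ (-γ) := by
    rw [← Real.rpow_add ha]; ring_nf
  refine ⟨?_, ?_, ?_, by simp⟩ <;> ext <;> simp [← h₁, ← h₂, mul_assoc, mul_comm, mul_left_comm]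

theorem Mmat_transpose_mul_sigMat_mul {a : ℝ} (ha : 0 < a) (s : Fin (d - 1) → ℝ) (t : ℝ)
    (tt : Fin (d - 1) → ℝ) :
    (Mmat d γ a s)ᵀ * sigMat d t tt * Mmat d γ a s =
      sigMat d (a⁻¹ * (t - s ⬝ᵥ tt)) (a ^ (-γ) • tt) := by
  rw [Mmat, transpose_mul, ← Atil_transpose_mul_sigMat_mul ha, ← Stil_transpose_mul_sigMat_mul]
  simp only [Matrix.mul_assoc]

theorem Mmat_apply_inl_inl (a : ℝ) (s : Fin (d - 1) → ℝ) :
    Mmat d γ a s (.inl 0) (.inl 0) = a ^ (-(1 : ℝ) / 2) := by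
  simp [Mmat, Stil, Atil, Matrix.mul_apply]

theorem Mmat_apply_inr_inl (a : ℝ) (s : Fin (d - 1) → ℝ) (i : Fin (d - 1)) :
    Mmat d γ a s (.inr i) (.inl 0) = -s i * a ^ (-(1 : ℝ) / 2) := by
  simp [Mmat, Stil, Atil, Matrix.mul_apply]

theorem Mmat_injective {a b : ℝ} (ha : 0 < a) (hb : 0 < b) {s s' : Fin (d - 1) → ℝ}
    (h : Mmat d γ a s = Mmat d γ b s') : a = b ∧ s = s' := by
  have hab : a = b := by
    have h₀ := congrFun₂ h (.inl 0) (.inl 0)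
    rw [Mmat_apply_inl_inl, Mmat_apply_inl_inl] at h₀
    exact (Real.rpow_left_inj ha.le hb.le (by norm_num)).1 h₀
  subst hab
  refine ⟨rfl, funext fun i => ?_⟩
  have hi := congrFun₂ h (.inr i) (.inl 0)
  rw [Mmat_apply_inr_inl, Mmat_apply_inr_inl] at hi
  exact neg_inj.1 (mul_right_cancel₀ (Real.rpow_pos_of_pos ha _).ne' hi)

theorem kappaPlus_eq_lowerSymplectic (x : ShearletPos d) :
    kappaPlus d γ x = lowerSymplectic (Mmat d γ x.1 x.2.1) (sigMat d x.2.2.1 x.2.2.2) :=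
  rfl

theorem kappaPlus_mem_symplecticGroup (x : ShearletPos d) :
    kappaPlus d γ x ∈ symplecticGroup (Fin 1 ⊕ Fin (d - 1)) ℝ :=
  lowerSymplectic_mem_symplecticGroup (isUnit_det_Mmat x.1.2 _) (sigMat_isSymm _ _)

theorem kappaPlus_shPosMul (x y : ShearletPos d) :
    kappaPlus d γ (shPosMul d γ x y) = kappaPlus d γ x * kappaPlus d γ y := by
  obtain ⟨⟨a, ha⟩, s, t, tt⟩ := x
  obtain ⟨⟨b, hb⟩, s', u, uu⟩ := y
  have hτ : (Mmat d γ a s)ᵀ * sigMat d (a * u + a ^ γ * (s ⬝ᵥ uu)) (a ^ γ • uu) * Mmat d γ a s =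
      sigMat d u uu := by
    rw [Mmat_transpose_mul_sigMat_mul ha, dotProduct_smul, smul_eq_mul, add_sub_cancel_right,
      inv_mul_cancel_left₀ ha.ne', smul_smul, ← Real.rpow_add ha, neg_add_cancel, Real.rpow_zero,
      one_smul]
  rw [kappaPlus_eq_lowerSymplectic, kappaPlus_eq_lowerSymplectic, kappaPlus_eq_lowerSymplectic,
    lowerSymplectic_mul (isUnit_det_Mmat ha s) hτ, Mmat_mul_Mmat ha hb, sigMat_add, ← add_assoc]
  rfl

theorem kappaPlus_injective : Function.Injective (kappaPlus d γ) := by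
  rintro ⟨⟨a, ha⟩, s, t, tt⟩ ⟨⟨b, hb⟩, s', u, uu⟩ h
  obtain ⟨hM, hσ⟩ := lowerSymplectic_injective (isUnit_det_Mmat ha s) h
  obtain ⟨rfl, rfl⟩ := Mmat_injective ha hb hM
  obtain ⟨rfl, rfl⟩ := sigMat_injective hσ
  rfl

end

/-- `κ⁺` is an injective group homomorphism from the connected shearlet group
into the symplectic group. -/
theorem kappaPlus_injective_hom (d : ℕ) (γ : ℝ) :
    Function.Injective (kappaPlus d γ) ∧
    (∀ x y : ShearletPos d,
      kappaPlus d γ (shPosMul d γ x y) = kappaPlus d γ x * kappaPlus d γ y) ∧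
    (∀ x : ShearletPos d, kappaPlus d γ x ∈ Matrix.symplecticGroup (Fin 1 ⊕ Fin (d - 1)) ℝ) :=
  ⟨kappaPlus_injective, kappaPlus_shPosMul, kappaPlus_mem_symplecticGroup⟩
end

section
/- The subspace {σ(t₁,t̃) = [[t₁, (1/2)t̃ᵀ],[(1/2)t̃, 0]] : t₁ ∈ ℝ, t̃ ∈ ℝ^{d-1}} of Sym(d,ℝ) is invariant under the action σ ↦ M^{−T} σ M^{−1} for all M of the form M(s,a) = S̃_s Ã_{a,γ} with a > 0, s ∈ ℝ^{d-1}. -/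
open Matrix

/-- Auxiliary: the explicit inverse of `Mmat`. -/
noncomputable def Ninv (d : ℕ) (γ a : ℝ) (s : Fin (d - 1) → ℝ) :
    Matrix (Fin 1 ⊕ Fin (d - 1)) (Fin 1 ⊕ Fin (d - 1)) ℝ :=
  Matrix.fromBlocks (a ^ ((1 : ℝ) / 2) • 1) 0
    (a ^ (γ - (1 : ℝ) / 2) • Matrix.of fun i (_ : Fin 1) => s i)
    (a ^ (γ - (1 : ℝ) / 2) • 1)

lemma Mmat_mul_Ninv (d : ℕ) (γ a : ℝ) (ha : 0 < a) (s : Fin (d - 1) → ℝ) :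
    Mmat d γ a s * Ninv d γ a s = 1 := by
  have h1 : a ^ ((2:ℝ)⁻¹) * a ^ (-1/2 : ℝ) = 1 := by
    rw [← Real.rpow_add ha]; norm_num
  have h2 : a ^ ((2:ℝ)⁻¹ - γ) * a ^ (γ - (2:ℝ)⁻¹) = 1 := by
    rw [← Real.rpow_add ha]; norm_num
  have h3 : a ^ (γ - (2:ℝ)⁻¹) * a ^ ((2:ℝ)⁻¹ - γ) = 1 := by
    rw [← Real.rpow_add ha]; norm_num
  unfold Mmat Ninv Stil Atil
  rw [Matrix.fromBlocks_multiply, Matrix.fromBlocks_multiply]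
  simp [Matrix.smul_mul, Matrix.mul_smul, smul_smul, h1, h2, h3]
  have : ((fun (i : Fin (d-1)) (_ : Fin 1) => -s i) + fun i _ => s i) = 0 := by
    funext i x; simp
  rw [this]
  simp [← Matrix.fromBlocks_one]

lemma Mmat_inv (d : ℕ) (γ a : ℝ) (ha : 0 < a) (s : Fin (d - 1) → ℝ) :
    (Mmat d γ a s)⁻¹ = Ninv d γ a s :=
  Matrix.inv_eq_right_inv (Mmat_mul_Ninv d γ a ha s)

/-- The subspace `{σ(t₁,t̃) : t₁ ∈ ℝ, t̃ ∈ ℝ^{d-1}}` of symmetric matrices is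
invariant under the action `σ ↦ M⁻ᵀ σ M⁻¹` for all `M = M(s,a)` with `a > 0`. -/
theorem sigMat_invariant (d : ℕ) (γ : ℝ) (a : ℝ) (ha : 0 < a)
    (s : Fin (d - 1) → ℝ) (t₁ : ℝ) (tt : Fin (d - 1) → ℝ) :
    ∃ (t₁' : ℝ) (tt' : Fin (d - 1) → ℝ),
      ((Mmat d γ a s)⁻¹)ᵀ * sigMat d t₁ tt * (Mmat d γ a s)⁻¹ = sigMat d t₁' tt' := by
  refine ⟨a * t₁ + a ^ γ * ∑ i, s i * tt i, fun i => a ^ γ * tt i, ?_⟩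
  rw [Mmat_inv d γ a ha s]
  unfold Ninv sigMat
  rw [Matrix.fromBlocks_transpose, Matrix.fromBlocks_multiply, Matrix.fromBlocks_multiply]
  simp only [Matrix.transpose_smul, Matrix.transpose_zero, Matrix.transpose_one,
    Matrix.smul_mul, Matrix.mul_smul, smul_smul, Matrix.one_mul, Matrix.mul_one,
    Matrix.mul_zero, Matrix.zero_mul]
  have key : a ^ ((2:ℝ)⁻¹) * a ^ ((2:ℝ)⁻¹) = a := by
    rw [← Real.rpow_add ha]; norm_num
  have key2 : a ^ ((2:ℝ)⁻¹) * a ^ (γ - (2:ℝ)⁻¹) = a ^ γ := by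
    rw [← Real.rpow_add ha]; ring_nf
  ext i j
  rcases i with i | i <;> rcases j with j | j <;>
    simp [Matrix.mul_apply, Matrix.fromBlocks, Finset.mul_sum]
  · rw [add_assoc, ← Finset.sum_add_distrib]
    congr 1
    · linear_combination t₁ * key
    · refine Finset.sum_congr rfl fun i _ => ?_
      linear_combination (s i * tt i) * key2
  · linear_combination (2⁻¹ * tt j) * key2
  · linear_combination (2⁻¹ * tt i) * key2
end

section
/- There does not exist A ∈ Sp(d,ℝ) with A² = I_{2d} satisfying A κ⁺(x) = κ⁺(R_{−1}x) A for all x ∈ 𝕊⁺, where κ⁺ is the standard embedding of the connected shearlet group into Sp(d,ℝ). -/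
open Matrix

/-- `R₋₁(a,s,t₁,t̃) = (a,s,−t₁,−t̃)`. -/
noncomputable def Rneg (d : ℕ) (x : ShearletPos d) : ShearletPos d :=
  ⟨x.1, x.2.1, -x.2.2.1, -x.2.2.2⟩

lemma Stil_zero (d : ℕ) : Stil d 0 = 1 := by
  ext i j
  cases i <;> cases j <;> simp [Stil, Matrix.one_apply]

lemma Atil_one (d : ℕ) (γ : ℝ) : Atil d γ 1 = 1 := by
  unfold Atil
  simp [Real.one_rpow]

lemma Mmat_one (d : ℕ) (γ : ℝ) : Mmat d γ 1 0 = 1 := by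
  rw [Mmat, Stil_zero, Atil_one, one_mul]

lemma kappa_x0 (d : ℕ) (γ : ℝ) :
    kappaPlus d γ ⟨⟨1, one_pos⟩, 0, 1, 0⟩ =
      Matrix.fromBlocks 1 0 (sigMat d 1 0) 1 := by
  unfold kappaPlus
  rw [Mmat_one]
  simp

lemma kappa_x0' (d : ℕ) (γ : ℝ) :
    kappaPlus d γ (Rneg d ⟨⟨1, one_pos⟩, 0, 1, 0⟩) =
      Matrix.fromBlocks 1 0 (-(sigMat d 1 0)) 1 := by
  have hneg : sigMat d (-1) (-(0 : Fin (d-1) → ℝ)) = -(sigMat d 1 0) := by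
    ext i j
    cases i <;> cases j <;> simp [sigMat]
  unfold kappaPlus Rneg
  simp only [Mmat_one]
  rw [show (-(0 : Fin (d-1) → ℝ)) = -(0 : Fin (d-1) → ℝ) from rfl]
  simp only [hneg]
  simp

lemma sig_mul_apply (d : ℕ) (X : Matrix (Fin 1 ⊕ Fin (d - 1)) (Fin 1 ⊕ Fin (d - 1)) ℝ)
    (k : Fin 1 ⊕ Fin (d - 1)) :
    (sigMat d 1 0 * X) (Sum.inl 0) k = X (Sum.inl 0) k := by
  simp [sigMat, Matrix.mul_apply, Fintype.sum_sum_type]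

lemma mul_sig_apply_inl (d : ℕ) (X : Matrix (Fin 1 ⊕ Fin (d - 1)) (Fin 1 ⊕ Fin (d - 1)) ℝ)
    (k : Fin 1 ⊕ Fin (d - 1)) :
    (X * sigMat d 1 0) k (Sum.inl 0) = X k (Sum.inl 0) := by
  simp [sigMat, Matrix.mul_apply, Fintype.sum_sum_type]

lemma mul_sig_apply_inr (d : ℕ) (X : Matrix (Fin 1 ⊕ Fin (d - 1)) (Fin 1 ⊕ Fin (d - 1)) ℝ)
    (k : Fin 1 ⊕ Fin (d - 1)) (j : Fin (d - 1)) :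
    (X * sigMat d 1 0) k (Sum.inr j) = 0 := by
  simp [sigMat, Matrix.mul_apply, Fintype.sum_sum_type]

/-- There is no symplectic matrix `A` with `A² = I` satisfying
`A κ⁺(x) = κ⁺(R₋₁ x) A` for all `x ∈ 𝕊⁺`. -/
theorem no_symplectic_intertwiner (d : ℕ) (hd : 1 ≤ d) (γ : ℝ) :
    ¬ ∃ A ∈ Matrix.symplecticGroup (Fin 1 ⊕ Fin (d - 1)) ℝ,
        A * A = 1 ∧
        ∀ x : ShearletPos d, A * kappaPlus d γ x = kappaPlus d γ (Rneg d x) * A := by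
  rintro ⟨A, hA, -, hcomm⟩
  set P := A.toBlocks₁₁ with hP
  set Q := A.toBlocks₁₂ with hQ
  set R := A.toBlocks₂₁ with hR
  set S := A.toBlocks₂₂ with hS
  have hAblk : A = Matrix.fromBlocks P Q R S := (Matrix.fromBlocks_toBlocks A).symm
  set σ : Matrix (Fin 1 ⊕ Fin (d - 1)) (Fin 1 ⊕ Fin (d - 1)) ℝ := sigMat d 1 0 with hσ
  -- intertwining at x₀
  have h0 := hcomm ⟨⟨1, one_pos⟩, 0, 1, 0⟩
  rw [kappa_x0, kappa_x0', hAblk, Matrix.fromBlocks_multiply, Matrix.fromBlocks_multiply] at h0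
  have h21 : R * 1 + S * σ = -σ * P + 1 * R := congrArg Matrix.toBlocks₂₁ h0
  have h22 : R * 0 + S * 1 = -σ * Q + 1 * S := congrArg Matrix.toBlocks₂₂ h0
  have hσQ : σ * Q = 0 := by
    have h : S = -σ * Q + S := by simpa using h22
    have h2 : (0 : Matrix _ _ ℝ) = -(σ * Q) := by
      have := congrArg (fun X => X - S) h
      simpa [neg_mul] using this
    simpa using h2.symm
  have hSσ : S * σ = -(σ * P) := by
    have h : R + S * σ = -(σ * P) + R := by simpa [neg_mul] using h21
    have := congrArg (fun X => X - R) h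
    simpa [add_sub_cancel_right, add_sub_cancel_left] using this
  -- symplectic condition
  have hsymp := (SymplecticGroup.mem_iff).mp hA
  rw [hAblk, Matrix.J, Matrix.fromBlocks_multiply, Matrix.fromBlocks_transpose,
    Matrix.fromBlocks_multiply] at hsymp
  have h12 : (P * 0 + Q * 1) * Rᵀ + (P * (-1) + Q * 0) * Sᵀ = -1 :=
    congrArg Matrix.toBlocks₁₂ hsymp
  have hsymp2 : Q * Rᵀ - P * Sᵀ = -1 := by
    have h := h12
    simp only [Matrix.mul_zero, Matrix.mul_one, zero_add, add_zero,
      Matrix.mul_neg, Matrix.neg_mul, ← sub_eq_add_neg] at h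
    exact h
  -- entry facts
  have hQ0 : ∀ k, Q (Sum.inl 0) k = 0 := fun k => by
    have := congrFun (congrFun hσQ (Sum.inl 0)) k
    rwa [hσ, sig_mul_apply] at this
  have hS11 : S (Sum.inl 0) (Sum.inl 0) = -P (Sum.inl 0) (Sum.inl 0) := by
    have := congrFun (congrFun hSσ (Sum.inl 0)) (Sum.inl 0)
    rw [hσ, mul_sig_apply_inl] at this
    simpa [sig_mul_apply] using this
  have hPj : ∀ j, P (Sum.inl 0) (Sum.inr j) = 0 := fun j => by
    have := congrFun (congrFun hSσ (Sum.inl 0)) (Sum.inr j)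
    rw [hσ, mul_sig_apply_inr] at this
    have h2 : -(P (Sum.inl 0) (Sum.inr j)) = 0 := by
      simpa [sig_mul_apply] using this.symm
    linarith
  -- the contradiction
  have e := congrFun (congrFun hsymp2 (Sum.inl 0)) (Sum.inl 0)
  simp [Matrix.mul_apply, Matrix.sub_apply, Fintype.sum_sum_type, hQ0, hPj, hS11] at e
  nlinarith [sq_nonneg (P (Sum.inl 0) (Sum.inl 0)), e]
end

section
/- For m = √(uz − vw) with uz − vw > 0, the matrix C = (1/m)·[[m², 0, 0, 0],[0, z, 0, −v],[0, 0, 1, 0],[0, −w, 0, u]] belongs to Sp(2,ℝ) and satisfies C H_{1,0} C^{−1} = H_{1,0}, C X_α C^{−1} = uX_α + vX_{α+β}, and C X_{α+β} C^{−1} = wX_α + zX_{α+β}. -/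
/-!
Write `C = m⁻¹ N` with `N` polynomial in `u, v, w, z`. The scalar cancels in every
conjugation, so `C X C⁻¹ = Y` reduces to the polynomial identity `N X = Y N`, while
`Nᵀ J N = m² J` gives `Cᵀ J C = J`. Since `J² = −1`, the symplectic relation exhibits
`−J Cᵀ J` as a left inverse of `C`, so no explicit inverse is needed.
-/

open Matrix

/-- `J = [[0, I₂], [−I₂, 0]]` as a `4×4` matrix. -/
def Jmat : Matrix (Fin 4) (Fin 4) ℝ :=
  !![0, 0, 1, 0; 0, 0, 0, 1; -1, 0, 0, 0; 0, -1, 0, 0]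

/-- `H_{1,0} = diag(1, 0, −1, 0)`. -/
def H10 : Matrix (Fin 4) (Fin 4) ℝ := Matrix.diagonal ![1, 0, -1, 0]

/-- Root vector `X_α`. -/
def Xa : Matrix (Fin 4) (Fin 4) ℝ :=
  !![0, 1, 0, 0; 0, 0, 0, 0; 0, 0, 0, 0; 0, 0, -1, 0]

/-- Root vector `X_{α+β}`. -/
def Xab : Matrix (Fin 4) (Fin 4) ℝ :=
  !![0, 0, 0, 1; 0, 0, 1, 0; 0, 0, 0, 0; 0, 0, 0, 0]

/-- The matrix `C = (1/m)·[[m²,0,0,0],[0,z,0,−v],[0,0,1,0],[0,−w,0,u]]` with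
`m = √(uz−vw)`. -/
noncomputable def Cmat (u v w z : ℝ) : Matrix (Fin 4) (Fin 4) ℝ :=
  (1 / Real.sqrt (u * z - v * w)) •
    !![u * z - v * w, 0, 0, 0; 0, z, 0, -v; 0, 0, 1, 0; 0, -w, 0, u]

section General

variable {n R : Type*} [Fintype n] [CommRing R]

theorem Matrix.isUnit_det_of_transpose_mul_mul_self [DecidableEq n] {J A : Matrix n n R}
    (hJ : J * J = -1) (hA : Aᵀ * J * A = J) : IsUnit A.det :=
  isUnit_det_of_left_inverse (B := -(J * Aᵀ * J)) <| by
    rw [neg_mul, Matrix.mul_assoc J, Matrix.mul_assoc J, hA, hJ, neg_neg]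

theorem Matrix.mul_mul_nonsing_inv_of_mul_eq_mul [DecidableEq n] {A X Y : Matrix n n R}
    (hA : IsUnit A.det) (h : A * X = Y * A) : A * X * A⁻¹ = Y := by
  rw [h, mul_nonsing_inv_cancel_right _ _ hA]

theorem Matrix.smul_mul_eq_mul_smul_of_mul_eq_mul {A X Y : Matrix n n R} (c : R)
    (h : A * X = Y * A) : c • A * X = Y * (c • A) := by
  rw [Matrix.smul_mul, Matrix.mul_smul, h]

end General

def CmatScaled (u v w z : ℝ) : Matrix (Fin 4) (Fin 4) ℝ :=
  !![u * z - v * w, 0, 0, 0; 0, z, 0, -v; 0, 0, 1, 0; 0, -w, 0, u]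

theorem Cmat_eq_smul (u v w z : ℝ) :
    Cmat u v w z = (1 / Real.sqrt (u * z - v * w)) • CmatScaled u v w z := rfl

theorem Jmat_mul_self : Jmat * Jmat = -1 := by
  ext i j
  fin_cases i <;> fin_cases j <;> simp [Jmat, Matrix.mul_apply, Fin.sum_univ_four]

theorem CmatScaled_transpose_mul_Jmat_mul (u v w z : ℝ) :
    (CmatScaled u v w z)ᵀ * Jmat * CmatScaled u v w z = (u * z - v * w) • Jmat := by
  ext i j
  fin_cases i <;> fin_cases j <;>
    simp [CmatScaled, Jmat, Matrix.mul_apply, Fin.sum_univ_four] <;> ring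

theorem CmatScaled_mul_H10 (u v w z : ℝ) :
    CmatScaled u v w z * H10 = H10 * CmatScaled u v w z := by
  ext i j
  fin_cases i <;> fin_cases j <;> simp [CmatScaled, H10, Matrix.mul_apply, Fin.sum_univ_four]

theorem CmatScaled_mul_Xa (u v w z : ℝ) :
    CmatScaled u v w z * Xa = (u • Xa + v • Xab) * CmatScaled u v w z := by
  ext i j
  fin_cases i <;> fin_cases j <;>
    simp [CmatScaled, Xa, Xab, Matrix.mul_apply, Fin.sum_univ_four] <;> ring

theorem CmatScaled_mul_Xab (u v w z : ℝ) :
    CmatScaled u v w z * Xab = (w • Xa + z • Xab) * CmatScaled u v w z := by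
  ext i j
  fin_cases i <;> fin_cases j <;>
    simp [CmatScaled, Xa, Xab, Matrix.mul_apply, Fin.sum_univ_four] <;> ring

theorem Cmat_transpose_mul_Jmat_mul {u v w z : ℝ} (h : 0 < u * z - v * w) :
    (Cmat u v w z)ᵀ * Jmat * Cmat u v w z = Jmat := by
  have hm : 1 / Real.sqrt (u * z - v * w) * (1 / Real.sqrt (u * z - v * w)) * (u * z - v * w)
      = 1 := by
    rw [div_mul_div_comm, one_mul, Real.mul_self_sqrt h.le, one_div_mul_cancel h.ne']
  rw [Cmat_eq_smul, transpose_smul, Matrix.smul_mul, Matrix.mul_smul, Matrix.smul_mul,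
    CmatScaled_transpose_mul_Jmat_mul, smul_smul, smul_smul, hm, one_smul]

/-- For `uz − vw > 0`, the matrix `C` is symplectic (`Cᵀ J C = J`) and conjugation
by `C` fixes `H_{1,0}` and sends `X_α ↦ uX_α + vX_{α+β}`, `X_{α+β} ↦ wX_α + zX_{α+β}`. -/
theorem Cmat_symplectic_conjugation (u v w z : ℝ) (h : 0 < u * z - v * w) :
    (Cmat u v w z)ᵀ * Jmat * Cmat u v w z = Jmat ∧
    Cmat u v w z * H10 * (Cmat u v w z)⁻¹ = H10 ∧
    Cmat u v w z * Xa * (Cmat u v w z)⁻¹ = u • Xa + v • Xab ∧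
    Cmat u v w z * Xab * (Cmat u v w z)⁻¹ = w • Xa + z • Xab := by
  have hsymp := Cmat_transpose_mul_Jmat_mul h
  have hunit := isUnit_det_of_transpose_mul_mul_self Jmat_mul_self hsymp
  refine ⟨hsymp, ?_, ?_, ?_⟩ <;>
    refine mul_mul_nonsing_inv_of_mul_eq_mul hunit (smul_mul_eq_mul_smul_of_mul_eq_mul _ ?_)
  exacts [CmatScaled_mul_H10 u v w z, CmatScaled_mul_Xa u v w z, CmatScaled_mul_Xab u v w z]
end
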